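/- arXiv:2004.03725 — 4 statements merged into one kernel-verified Lean document; each statement's English description precedes it below -/
import Mathlib

section
/- Let G be a directed graph on n+m nodes where nodes 1,...,n are followers and nodes n+1,...,n+m are leaders (leaders have no incoming edges). Partition the graph Laplacian as L = [[L1, L2],[0,0]] with L1 ∈ ℝ^{n×n}, L2 ∈ ℝ^{n×m}. If for each follower there exists at least one leader with a directed path to it, then L1 is invertible, all eigenvalues of L1 have positive real parts, every entry of -L1^{-1}L2 is nonnegative, and each row of -L1^{-1}L2 sums to 1. -/
/-!
Writing the Laplacian as `(L x)ᵢ = ∑ⱼ aᵢⱼ (xᵢ - xⱼ)`, the system `L₁ y + L₂ z ≥ 0` says that the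
vector `(y, z)` on all nodes is superharmonic at every follower. A discrete minimum principle then
shows `z ≥ 0 → y ≥ 0`: a negative minimum of `(y, z)` is attained at a follower and spreads to every
in-neighbour, hence backwards along a path to some leader, where the value is `≥ 0`. Applied with
`z = 0` this makes `L₁` injective, and applied to the columns of `L₁ y + L₂ eₖ = 0` it gives
`-L₁⁻¹L₂ ≥ 0`; the rows sum to one because `L` kills constant vectors. Finally `L₁` is weakly
diagonally dominant with nonpositive off-diagonal entries, so by Gershgorin its eigenvalues lie in
discs `|μ - c| ≤ c`, whose only point off the open right half-plane is `0`, excluded by invertibility.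
-/

open Matrix Finset

section MinimumPrinciple

variable {V : Type*} [Fintype V] {a : Matrix V V ℝ} {x : V → ℝ}

theorem apply_eq_of_forall_le_of_sum_mul_sub_nonneg (ha : ∀ i j, 0 ≤ a i j) {v : V}
    (hmin : ∀ j, x v ≤ x j) (hsum : 0 ≤ ∑ j, a v j * (x v - x j)) {u : V} (hu : 0 < a v u) :
    x u = x v := by
  have hterm : ∀ j ∈ univ, a v j * (x v - x j) ≤ 0 :=
    fun j _ => mul_nonpos_of_nonneg_of_nonpos (ha v j) (sub_nonpos.mpr (hmin j))
  have hzero := (sum_eq_zero_iff_of_nonpos hterm).mp (le_antisymm (sum_nonpos hterm) hsum) u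
    (mem_univ u)
  linarith [(mul_eq_zero.mp hzero).resolve_left hu.ne']

theorem nonneg_of_sum_mul_sub_nonneg (ha : ∀ i j, 0 ≤ a i j) (B : Set V)
    (hB : ∀ v ∈ B, 0 ≤ x v) (hsuper : ∀ v ∉ B, 0 ≤ ∑ j, a v j * (x v - x j))
    (hreach : ∀ v ∉ B, ∃ u ∈ B, Relation.TransGen (fun u v => 0 < a v u) u v) :
    0 ≤ x := by
  by_contra hneg
  obtain ⟨w, hw⟩ := not_forall.mp hneg
  have : Nonempty V := ⟨w⟩
  obtain ⟨v, hv⟩ := Finite.exists_min x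
  have hv0 : x v < 0 := (hv w).trans_lt (not_le.mp hw)
  have hnotB : ∀ {u}, x u = x v → u ∉ B := fun hu huB => (hB _ huB).not_gt (hu ▸ hv0)
  have hback : ∀ {u w}, Relation.TransGen (fun u v => 0 < a v u) u w → x w = x v → x u = x v := by
    intro u w huw
    induction huw with
    | single h => exact fun hw => (apply_eq_of_forall_le_of_sum_mul_sub_nonneg ha
        (hw ▸ hv) (hsuper _ (hnotB hw)) h).trans hw
    | tail _ h ih => exact fun hw => ih ((apply_eq_of_forall_le_of_sum_mul_sub_nonneg ha
        (hw ▸ hv) (hsuper _ (hnotB hw)) h).trans hw)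
  obtain ⟨u, huB, hpath⟩ := hreach v (hnotB rfl)
  exact hnotB (hback hpath rfl) huB

end MinimumPrinciple

section Laplacian

variable {V : Type*} [Fintype V] [DecidableEq V] {a L : Matrix V V ℝ}

theorem laplacian_mulVec_apply (hL : ∀ i j, L i j = (if i = j then ∑ k, a i k else 0) - a i j)
    (x : V → ℝ) (i : V) : (L *ᵥ x) i = ∑ j, a i j * (x i - x j) := by
  simp only [mulVec, dotProduct, hL, sub_mul, ite_mul, zero_mul, sum_sub_distrib, sum_ite_eq,
    mem_univ, if_true, mul_sub, sum_mul]

theorem laplacian_mulVec_one (hL : ∀ i j, L i j = (if i = j then ∑ k, a i k else 0) - a i j) :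
    L *ᵥ 1 = 0 := by
  ext i
  simp [laplacian_mulVec_apply hL]

end Laplacian

theorem mulVec_add_mulVec_eq_mulVec_append {R : Type*} [NonUnitalNonAssocSemiring R] {n m : ℕ}
    {L : Matrix (Fin (n+m)) (Fin (n+m)) R} {L1 : Matrix (Fin n) (Fin n) R}
    {L2 : Matrix (Fin n) (Fin m) R}
    (hL1 : ∀ i j, L1 i j = L (Fin.castAdd m i) (Fin.castAdd m j))
    (hL2 : ∀ i k, L2 i k = L (Fin.castAdd m i) (Fin.natAdd n k)) (y : Fin n → R) (z : Fin m → R)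
    (i : Fin n) : (L1 *ᵥ y + L2 *ᵥ z) i = (L *ᵥ Fin.append y z) (Fin.castAdd m i) := by
  simp [mulVec, dotProduct, Fin.sum_univ_add, hL1, hL2]

theorem Complex.re_pos_of_norm_sub_ofReal_le {μ : ℂ} {c : ℝ} (h : ‖μ - c‖ ≤ c) (hμ : μ ≠ 0) :
    0 < μ.re := by
  by_contra! hre
  have hsq : (μ.re - c) ^ 2 + μ.im ^ 2 ≤ c ^ 2 := by
    have := pow_le_pow_left₀ (norm_nonneg _) h 2
    rwa [Complex.sq_norm, Complex.normSq_apply, Complex.sub_re, Complex.sub_im, Complex.ofReal_re,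
      Complex.ofReal_im, sub_zero, ← sq, ← sq] at this
  have hc : 0 ≤ c := (norm_nonneg _).trans h
  have h0 : μ.re ^ 2 + μ.im ^ 2 ≤ 0 := by nlinarith
  exact hμ (Complex.ext (by rw [Complex.zero_re]; nlinarith [sq_nonneg μ.im])
    (by rw [Complex.zero_im]; nlinarith [sq_nonneg μ.re]))

theorem Matrix.re_pos_of_mem_spectrum_map_ofReal {ι : Type*} [Fintype ι] [DecidableEq ι]
    {M : Matrix ι ι ℝ} (hM : IsUnit M) (hoff : ∀ i j, i ≠ j → M i j ≤ 0)
    (hrow : ∀ i, 0 ≤ ∑ j, M i j) {μ : ℂ} (hμ : μ ∈ spectrum ℂ (M.map Complex.ofReal)) :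
    0 < μ.re := by
  have hμ0 : μ ≠ 0 := by
    rintro rfl
    exact (spectrum.zero_mem_iff ℂ).mp hμ (hM.map Complex.ofRealHom.mapMatrix)
  rw [← Matrix.spectrum_toLin', ← Module.End.hasEigenvalue_iff_mem_spectrum] at hμ
  obtain ⟨k, hk⟩ := eigenvalue_mem_ball hμ
  refine Complex.re_pos_of_norm_sub_ofReal_le (c := M k k) ?_ hμ0
  calc ‖μ - M k k‖ ≤ ∑ j ∈ univ.erase k, ‖(M k j : ℂ)‖ := by simpa [dist_eq_norm] using hk
    _ = -∑ j ∈ univ.erase k, M k j := by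
      rw [← sum_neg_distrib]
      refine sum_congr rfl fun j hj => ?_
      rw [Complex.norm_real, Real.norm_eq_abs, abs_of_nonpos (hoff k j (ne_of_mem_erase hj).symm)]
    _ ≤ M k k := by linarith [hrow k, add_sum_erase univ (M k) (mem_univ k)]

structure IsLaplacianPartition {n m : ℕ} (a L : Matrix (Fin (n+m)) (Fin (n+m)) ℝ)
    (L1 : Matrix (Fin n) (Fin n) ℝ) (L2 : Matrix (Fin n) (Fin m) ℝ) : Prop where
  laplacian_apply : ∀ i j, L i j = (if i = j then ∑ k, a i k else 0) - a i j
  followerBlock_apply : ∀ i j, L1 i j = L (Fin.castAdd m i) (Fin.castAdd m j)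
  leaderBlock_apply : ∀ i k, L2 i k = L (Fin.castAdd m i) (Fin.natAdd n k)

namespace IsLaplacianPartition

variable {n m : ℕ} {a L : Matrix (Fin (n+m)) (Fin (n+m)) ℝ} {L1 : Matrix (Fin n) (Fin n) ℝ}
  {L2 : Matrix (Fin n) (Fin m) ℝ} (h : IsLaplacianPartition a L L1 L2)
include h

theorem leaderBlock_eq (i : Fin n) (k : Fin m) :
    L2 i k = -a (Fin.castAdd m i) (Fin.natAdd n k) := by
  have hne : Fin.castAdd m i ≠ Fin.natAdd n k := Fin.ne_of_val_ne (by simp; omega)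
  simp [h.leaderBlock_apply, h.laplacian_apply, hne]

theorem followerBlock_eq_of_ne {i j : Fin n} (hij : i ≠ j) :
    L1 i j = -a (Fin.castAdd m i) (Fin.castAdd m j) := by
  simp [h.followerBlock_apply, h.laplacian_apply, hij]

theorem followerBlock_mulVec_one : L1 *ᵥ 1 = -(L2 *ᵥ 1) := by
  refine eq_neg_of_add_eq_zero_left (funext fun i => ?_)
  have hone : Fin.append (1 : Fin n → ℝ) (1 : Fin m → ℝ) = 1 :=
    funext (Fin.addCases (by simp) (by simp))
  rw [mulVec_add_mulVec_eq_mulVec_append h.followerBlock_apply h.leaderBlock_apply, hone,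
    laplacian_mulVec_one h.laplacian_apply, Pi.zero_apply, Pi.zero_apply]

variable (hnn : ∀ i j, 0 ≤ a i j)
    (hreach : ∀ i : Fin n, ∃ k : Fin m,
      Relation.TransGen (fun u v : Fin (n+m) => 0 < a v u) (Fin.natAdd n k) (Fin.castAdd m i))
include hnn hreach

theorem nonneg_of_mulVec_add_mulVec_nonneg {y : Fin n → ℝ} {z : Fin m → ℝ} (hz : 0 ≤ z)
    (hyz : 0 ≤ L1 *ᵥ y + L2 *ᵥ z) : 0 ≤ y := by
  have hx := nonneg_of_sum_mul_sub_nonneg hnn (Set.range (Fin.natAdd n)) (x := Fin.append y z)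
    (by rintro _ ⟨k, rfl⟩; simpa using hz k)
    (fun v hv => by
      induction v using Fin.addCases with
      | left i =>
        rw [← laplacian_mulVec_apply h.laplacian_apply,
          ← mulVec_add_mulVec_eq_mulVec_append h.followerBlock_apply h.leaderBlock_apply]
        exact hyz i
      | right k => exact absurd ⟨k, rfl⟩ hv)
    (fun v hv => by
      induction v using Fin.addCases with
      | left i =>
        obtain ⟨k, hk⟩ := hreach i
        exact ⟨_, ⟨k, rfl⟩, hk⟩
      | right k => exact absurd ⟨k, rfl⟩ hv)
  exact fun i => by simpa using hx (Fin.castAdd m i)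

theorem isUnit_followerBlock : IsUnit L1 := by
  rw [isUnit_iff_isUnit_det, isUnit_iff_ne_zero, Ne, ← exists_mulVec_eq_zero_iff]
  rintro ⟨y, hy0, hy⟩
  have hzero : (0 : Fin n → ℝ) ≤ L1 *ᵥ y + L2 *ᵥ 0 := by simp [hy]
  have hzero' : (0 : Fin n → ℝ) ≤ L1 *ᵥ -y + L2 *ᵥ 0 := by simp [mulVec_neg, hy]
  exact hy0 (le_antisymm
    (neg_nonneg.mp (h.nonneg_of_mulVec_add_mulVec_nonneg hnn hreach le_rfl hzero'))
    (h.nonneg_of_mulVec_add_mulVec_nonneg hnn hreach le_rfl hzero))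

theorem neg_inv_mul_nonneg (i : Fin n) (k : Fin m) : 0 ≤ (-(L1⁻¹ * L2)) i k := by
  have hdet := (isUnit_iff_isUnit_det L1).mp (h.isUnit_followerBlock hnn hreach)
  have hcol : L1 *ᵥ ((-(L1⁻¹ * L2)) *ᵥ Pi.single k 1) + L2 *ᵥ Pi.single k 1 = 0 := by
    rw [mulVec_mulVec, Matrix.mul_neg, ← Matrix.mul_assoc, mul_nonsing_inv _ hdet, Matrix.one_mul,
      neg_mulVec, neg_add_cancel]
  have := h.nonneg_of_mulVec_add_mulVec_nonneg hnn hreach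
    (Pi.single_nonneg.mpr zero_le_one) hcol.ge i
  simpa [mulVec_single_one] using this

theorem sum_neg_inv_mul_eq_one (i : Fin n) : ∑ k, (-(L1⁻¹ * L2)) i k = 1 := by
  have hdet := (isUnit_iff_isUnit_det L1).mp (h.isUnit_followerBlock hnn hreach)
  have hrows : -(L1⁻¹ * L2) *ᵥ 1 = 1 := by
    rw [neg_mulVec, ← mulVec_mulVec, ← mulVec_neg, ← h.followerBlock_mulVec_one, mulVec_mulVec,
      nonsing_inv_mul _ hdet, one_mulVec]
  simpa [mulVec, dotProduct] using congrFun hrows i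

theorem re_pos_of_mem_spectrum {μ : ℂ} (hμ : μ ∈ spectrum ℂ (L1.map Complex.ofReal)) :
    0 < μ.re := by
  refine Matrix.re_pos_of_mem_spectrum_map_ofReal (h.isUnit_followerBlock hnn hreach)
    (fun i j hij => (h.followerBlock_eq_of_ne hij).trans_le (neg_nonpos.mpr (hnn _ _)))
    (fun i => ?_) hμ
  have hrow := congrFun h.followerBlock_mulVec_one i
  simp only [mulVec, dotProduct, Pi.one_apply, mul_one, Pi.neg_apply, h.leaderBlock_eq,
    sum_neg_distrib, neg_neg] at hrow
  exact hrow ▸ sum_nonneg fun k _ => hnn _ _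

end IsLaplacianPartition

theorem stmt0_general (n m : ℕ) (a : Matrix (Fin (n+m)) (Fin (n+m)) ℝ)
    (hnn : ∀ i j, 0 ≤ a i j)
    (L : Matrix (Fin (n+m)) (Fin (n+m)) ℝ)
    (hL : ∀ i j, L i j = (if i = j then ∑ k, a i k else 0) - a i j)
    (L1 : Matrix (Fin n) (Fin n) ℝ)
    (hL1 : ∀ i j, L1 i j = L (Fin.castAdd m i) (Fin.castAdd m j))
    (L2 : Matrix (Fin n) (Fin m) ℝ)
    (hL2 : ∀ i k, L2 i k = L (Fin.castAdd m i) (Fin.natAdd n k))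
    (hreach : ∀ i : Fin n, ∃ k : Fin m,
      Relation.TransGen (fun u v : Fin (n+m) => 0 < a v u)
        (Fin.natAdd n k) (Fin.castAdd m i)) :
    IsUnit L1 ∧
    (∀ μ ∈ spectrum ℂ (L1.map Complex.ofReal), 0 < μ.re) ∧
    (∀ i k, 0 ≤ (-(L1⁻¹ * L2)) i k) ∧
    (∀ i, ∑ k, (-(L1⁻¹ * L2)) i k = 1) := by
  have h : IsLaplacianPartition a L L1 L2 := ⟨hL, hL1, hL2⟩
  exact ⟨h.isUnit_followerBlock hnn hreach, fun _ => h.re_pos_of_mem_spectrum hnn hreach,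
    h.neg_inv_mul_nonneg hnn hreach, h.sum_neg_inv_mul_eq_one hnn hreach⟩

theorem stmt0 (n m : ℕ) (a : Matrix (Fin (n+m)) (Fin (n+m)) ℝ)
    (hnn : ∀ i j, 0 ≤ a i j) (hhollow : ∀ i, a i i = 0)
    (hleader : ∀ (k : Fin m) (j : Fin (n+m)), a (Fin.natAdd n k) j = 0)
    (L : Matrix (Fin (n+m)) (Fin (n+m)) ℝ)
    (hL : ∀ i j, L i j = (if i = j then ∑ k, a i k else 0) - a i j)
    (L1 : Matrix (Fin n) (Fin n) ℝ)
    (hL1 : ∀ i j, L1 i j = L (Fin.castAdd m i) (Fin.castAdd m j))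
    (L2 : Matrix (Fin n) (Fin m) ℝ)
    (hL2 : ∀ i k, L2 i k = L (Fin.castAdd m i) (Fin.natAdd n k))
    (hreach : ∀ i : Fin n, ∃ k : Fin m,
      Relation.TransGen (fun u v : Fin (n+m) => 0 < a v u)
        (Fin.natAdd n k) (Fin.castAdd m i)) :
    IsUnit L1 ∧
    (∀ μ ∈ spectrum ℂ (L1.map Complex.ofReal), 0 < μ.re) ∧
    (∀ i k, 0 ≤ (-(L1⁻¹ * L2)) i k) ∧
    (∀ i, ∑ k, (-(L1⁻¹ * L2)) i k = 1) :=
  stmt0_general n m a hnn L hL L1 hL1 L2 hL2 hreach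
end

section
/- Consider the iterative distributed algorithm where each follower i initializes S_i^{(0)} = N_i^L (its leader neighbors) and updates S_i^{(k)} = (⋃_{j ∈ N_i \ N_i^L} S_j^{(k-1)}) ∪ S_i^{(0)}. If the graph G is a finite directed acyclic graph in which every follower is reachable from at least one leader, then for every follower i, S_i^{(k)} converges in finitely many iterations to the set of all influential leaders of i (all leaders having a directed path to i), and the number of iterations required is at most the length of the longest directed path in Ḡ_i. -/
/-!
By induction on `k`, `S_v^{(k)}` consists of leaders reaching `v`, and it contains every leader `w`
with a path `w → ⋯ → v` of at most `k + 1` edges: the inner vertices of such a path are not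
leaders, since leaders have no incoming edges, so the iteration carries `w` along it one edge per
step. A path `w → ⋯ → i` is, by acyclicity, a list of distinct vertices of `Ḡ_i`, hence has at
most `K` edges.
-/

open Relation

theorem List.IsChain.pairwise_transGen {α : Type*} {r : α → α → Prop} {l : List α}
    (h : l.IsChain r) : l.Pairwise (TransGen r) :=
  List.isChain_iff_pairwise.mp (h.imp fun _ _ => TransGen.single)

theorem List.IsChain.nodup_of_acyclic {α : Type*} {r : α → α → Prop} {l : List α}
    (hacyclic : ∀ a, ¬ TransGen r a a) (h : l.IsChain r) : l.Nodup := by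
  have : Std.Irrefl (TransGen r) := ⟨hacyclic⟩
  exact h.pairwise_transGen.nodup

theorem List.exists_isChain_cons_append_singleton_of_transGen {α : Type*} {r : α → α → Prop}
    {a b : α} (h : TransGen r a b) : ∃ l, (a :: l ++ [b]).IsChain r := by
  obtain ⟨c, hac, hcb⟩ := TransGen.tail'_iff.mp h
  obtain ⟨l, hl, hlast⟩ := List.exists_isChain_cons_of_relationReflTransGen hac
  refine ⟨l, hl.append (.singleton b) fun x hx y hy => ?_⟩
  rw [List.getLast?_eq_some_getLast (List.cons_ne_nil a l), hlast, Option.mem_some_iff] at hx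
  rw [List.head?_singleton, Option.mem_some_iff] at hy
  exact hx ▸ hy ▸ hcb

section LeaderSets

variable {V : Type*} (E : V → V → Prop) (leader : V → Prop)

def leaderSets : ℕ → V → Set V
  | 0, v => {w | leader w ∧ E w v}
  | k + 1, v => (⋃ j ∈ {j | ¬ leader j ∧ E j v}, leaderSets k j) ∪ {w | leader w ∧ E w v}

variable {E leader}

theorem eq_leaderSets {S : ℕ → V → Set V} (hS0 : ∀ v, S 0 v = {w | leader w ∧ E w v})
    (hSstep : ∀ k v, S (k + 1) v = (⋃ j ∈ {j | ¬ leader j ∧ E j v}, S k j) ∪ S 0 v) :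
    S = leaderSets E leader := by
  funext k
  induction k with
  | zero => exact funext hS0
  | succ k ih => funext v; rw [hSstep, ih, hS0]; rfl

theorem leaderSets_subset_succ (k : ℕ) (v : V) :
    leaderSets E leader k v ⊆ leaderSets E leader (k + 1) v := by
  induction k generalizing v with
  | zero => exact Set.subset_union_right
  | succ k ih => exact Set.union_subset_union_left _ (Set.biUnion_mono subset_rfl fun j _ => ih j)

theorem monotone_leaderSets (v : V) : Monotone fun k => leaderSets E leader k v :=
  monotone_nat_of_le_succ fun k => leaderSets_subset_succ k v

theorem leaderSets_subset (k : ℕ) (v : V) :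
    leaderSets E leader k v ⊆ {w | leader w ∧ TransGen E w v} := by
  induction k generalizing v with
  | zero => exact fun w ⟨hw, hwv⟩ => ⟨hw, .single hwv⟩
  | succ k ih =>
    rintro w (hw | ⟨hw, hwv⟩)
    · obtain ⟨j, ⟨-, hjv⟩, hwj⟩ := Set.mem_iUnion₂.mp hw
      exact ⟨(ih j hwj).1, (ih j hwj).2.tail hjv⟩
    · exact ⟨hw, .single hwv⟩

theorem mem_leaderSets_of_isChain (hnoIn : ∀ v w, leader v → ¬ E w v) {a : V}
    (ha : leader a) (l : List V) (v : V) (hl : (a :: l ++ [v]).IsChain E) :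
    a ∈ leaderSets E leader l.length v := by
  induction l using List.reverseRecOn generalizing v with
  | nil => exact ⟨ha, List.isChain_pair.mp hl⟩
  | append_singleton t j ih =>
    rw [← List.cons_append, List.isChain_append] at hl
    obtain ⟨hlj, -, hjv⟩ := hl
    have hjv : E j v := hjv j List.getLast?_concat v rfl
    have hj : ¬ leader j := by
      obtain ⟨u, -, huj⟩ := TransGen.tail'_iff.mp
        (List.rel_of_pairwise_cons hlj.pairwise_transGen List.mem_concat_self)
      exact fun hj => hnoIn j u hj huj
    rw [List.length_append, List.length_singleton]
    exact Or.inl (Set.mem_biUnion (x := j) ⟨hj, hjv⟩ (ih j hlj))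

end LeaderSets

theorem stmt3_general {V : Type*} (E : V → V → Prop) (leader : V → Prop)
    (hacyclic : ∀ v, ¬ Relation.TransGen E v v)
    (hnoIn : ∀ v w, leader v → ¬ E w v)
    (S : ℕ → V → Set V)
    (hS0 : ∀ v, S 0 v = {w | leader w ∧ E w v})
    (hSstep : ∀ k v, S (k+1) v = (⋃ j ∈ {j | ¬ leader j ∧ E j v}, S k j) ∪ S 0 v)
    (i : V)
    (K : ℕ)
    (hK : ∀ l : List V, l.Chain' E → l.Nodup →
      (∀ v ∈ l, v = i ∨ Relation.TransGen E v i) → l.length ≤ K + 1) :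
    ∀ k, K ≤ k → S k i = {w | leader w ∧ Relation.TransGen E w i} := by
  intro k hk
  obtain rfl := eq_leaderSets hS0 hSstep
  refine (leaderSets_subset k i).antisymm fun w ⟨hw, hwi⟩ => ?_
  obtain ⟨l, hl⟩ := List.exists_isChain_cons_append_singleton_of_transGen hwi
  have hreach : ∀ v ∈ w :: l ++ [i], v = i ∨ TransGen E v i := by
    have := (List.pairwise_append.mp hl.pairwise_transGen).2.2
    simp only [List.mem_append, List.mem_singleton] at this ⊢
    rintro v (hv | rfl)
    · exact .inr (this v hv i rfl)
    · exact .inl rfl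
  have hlen := hK _ hl (hl.nodup_of_acyclic hacyclic) hreach
  simp only [List.length_append, List.length_cons] at hlen
  exact monotone_leaderSets i (by omega) (mem_leaderSets_of_isChain hnoIn hw l i hl)

/-- The distributed set-iteration `S_i^{(k)}` converges, in a number of
iterations bounded by the length of the longest directed path in the influence subgraph
`Ḡ_i`, to the set of all influential leaders of follower `i`. -/
theorem stmt3 {V : Type*} [Fintype V] (E : V → V → Prop) (leader : V → Prop)
    (hacyclic : ∀ v, ¬ Relation.TransGen E v v)
    (hnoIn : ∀ v w, leader v → ¬ E w v)
    (hreach : ∀ v, ¬ leader v → ∃ w, leader w ∧ Relation.TransGen E w v)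
    (S : ℕ → V → Set V)
    (hS0 : ∀ v, S 0 v = {w | leader w ∧ E w v})
    (hSstep : ∀ k v, S (k+1) v = (⋃ j ∈ {j | ¬ leader j ∧ E j v}, S k j) ∪ S 0 v)
    (i : V) (hi : ¬ leader i)
    (K : ℕ)
    (hK : ∀ l : List V, l.Chain' E → l.Nodup →
      (∀ v ∈ l, v = i ∨ Relation.TransGen E v i) → l.length ≤ K + 1) :
    ∀ k, K ≤ k → S k i = {w | leader w ∧ Relation.TransGen E w i} :=
  stmt3_general E leader hacyclic hnoIn S hS0 hSstep i K hK
end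

section
/- Let G be a finite directed acyclic graph in which every follower is reachable from at least one leader. For each follower i, let L̄_{1ℓ}^i and L̄_{2ℓ}^i be the Laplacian sub-blocks of the local influence subgraph Ḡ_i (followers-to-followers and followers-to-leaders respectively). Then the row vector Φ_{Pℓ}^i = -Υ_i (L̄_{1ℓ}^i)^{-1} L̄_{2ℓ}^i (where Υ_i is the indicator row vector selecting the row of node i) equals the row of -L1^{-1}L2 corresponding to follower i in the global Laplacian partition, restricted to the influential leaders of i. -/
open Matrix Relation

/-!
Write `X = L1⁻¹ L2`. If follower `j` lies in `Ḡ_i`, so does every in-neighbour of `j`; hence the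
rows of `L1` indexed by `Ḡ_i` vanish outside `Ḡ_i`, `L1` is block triangular with `L̄₁ⁱ` as a
diagonal block, and the local sums in `L̄₁ⁱ` are the global in-degrees. Restricting `L1 X = L2` to
the rows of `Ḡ_i` gives `L̄₁ⁱ X_loc = L2_loc`, so `X_loc = (L̄₁ⁱ)⁻¹ L2_loc`; the columns of `L2_loc`
at the influential leaders form `L̄₂ⁱ`, and those at the other leaders vanish.

`L1` is invertible by a maximum principle: it is the follower Laplacian grounded by the leader
weights, and on a kernel vector the maximal modulus propagates backwards along edges, up to a
follower fed directly by a leader, where the grounding forces it to be zero.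
-/

theorem Relation.TransGen.exists_entry_into_range {α β : Type*} {R : α → α → Prop} {f : β → α}
    {x : α} {y : β} (hx : x ∉ Set.range f) (h : TransGen R x (f y)) :
    ∃ x' ∉ Set.range f, ∃ y', R x' (f y') ∧ ReflTransGen (fun u v => R (f u) (f v)) y' y := by
  generalize hz : f y = z at h
  induction h generalizing y with
  | single hxz => exact ⟨x, hx, y, hz ▸ hxz, .refl⟩
  | @tail b c _ hbc ih =>
    by_cases hb : b ∈ Set.range f
    · obtain ⟨y'', rfl⟩ := hb
      obtain ⟨x', hx', y', hstep, hpath⟩ := ih rfl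
      exact ⟨x', hx', y', hstep, hpath.tail (hz ▸ hbc)⟩
    · exact ⟨b, hb, y, hz ▸ hbc, .refl⟩

theorem Fintype.sum_subtype_eq_sum_of_eq_zero {ι M : Type*} [Fintype ι] [AddCommMonoid M]
    {p : ι → Prop} [DecidablePred p] {f : ι → M} (hf : ∀ x, ¬ p x → f x = 0) :
    ∑ x : Subtype p, f x = ∑ x, f x := by
  rw [← Fintype.sum_subtype_add_sum_subtype p f,
    Fintype.sum_eq_zero (fun x : {x // ¬ p x} => f x) fun x => hf x x.2, add_zero]

theorem Matrix.mul_apply_of_row_eq_ite {l n m α : Type*} [Fintype n] [DecidableEq n]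
    [NonAssocSemiring α] {U : Matrix l n α} {u : l} {j₀ : n}
    (hU : ∀ j, U u j = if j = j₀ then 1 else 0) (M : Matrix n m α) (k : m) :
    (U * M) u k = M j₀ k := by
  simp only [mul_apply, hU, ite_mul, one_mul, zero_mul, Finset.sum_ite_eq', Finset.mem_univ,
    if_true]

section GroundedLaplacian

variable {F : Type*} [Fintype F] [DecidableEq F] {b : Matrix F F ℝ} {r : F → ℝ}

theorem grounded_laplacian_max_row (hb : ∀ j k, 0 ≤ b j k) (hr : ∀ j, 0 ≤ r j) {z : F → ℝ}
    (hz : (diagonal (fun j => r j + ∑ k, b j k) - b) *ᵥ z = 0) {j : F}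
    (hj : ∀ k, |z k| ≤ |z j|) :
    r j * |z j| = 0 ∧ ∀ k, 0 < b j k → |z k| = |z j| := by
  have hrow : (r j + ∑ k, b j k) * z j = ∑ k, b j k * z k := by
    have := congrFun hz j
    simp only [mulVec, dotProduct, Matrix.sub_apply, diagonal_apply, sub_mul, ite_mul, zero_mul,
      Finset.sum_sub_distrib, Finset.sum_ite_eq, Finset.mem_univ, if_true, Pi.zero_apply] at this
    linarith
  have hdiag : 0 ≤ r j + ∑ k, b j k := add_nonneg (hr j) (Finset.sum_nonneg fun k _ => hb j k)
  have hgap : ∀ k, 0 ≤ b j k * (|z j| - |z k|) := fun k => mul_nonneg (hb j k) (sub_nonneg.2 (hj k))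
  have hle : r j * |z j| + ∑ k, b j k * (|z j| - |z k|) ≤ 0 :=
    calc r j * |z j| + ∑ k, b j k * (|z j| - |z k|)
        = |(r j + ∑ k, b j k) * z j| - ∑ k, |b j k * z k| := by
          simp only [abs_mul, abs_of_nonneg hdiag, abs_of_nonneg (hb j _), mul_sub,
            Finset.sum_sub_distrib, ← Finset.sum_mul]
          ring
      _ ≤ 0 := by rw [hrow]; exact sub_nonpos.2 (Finset.abs_sum_le_sum_abs _ _)
  have hsum := Finset.sum_nonneg fun k (_ : k ∈ Finset.univ) => hgap k
  have hrj := mul_nonneg (hr j) (abs_nonneg (z j))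
  refine ⟨by linarith, fun k hk => ?_⟩
  have hterm := (Finset.sum_eq_zero_iff_of_nonneg fun k _ => hgap k).1 (by linarith) k
    (Finset.mem_univ k)
  linarith [(mul_eq_zero.1 hterm).resolve_left hk.ne']

theorem det_grounded_laplacian_ne_zero (hb : ∀ j k, 0 ≤ b j k) (hr : ∀ j, 0 ≤ r j)
    (hreach : ∀ j, ∃ g, 0 < r g ∧ ReflTransGen (fun u v => 0 < b v u) g j) :
    (diagonal (fun j => r j + ∑ k, b j k) - b).det ≠ 0 := by
  intro hdet
  obtain ⟨z, hz0, hz⟩ := exists_mulVec_eq_zero_iff.2 hdet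
  obtain ⟨k₀, -⟩ := Function.ne_iff.1 hz0
  have : Nonempty F := ⟨k₀⟩
  obtain ⟨j, hj⟩ := Finite.exists_max fun j => |z j|
  obtain ⟨g, hg, hgj⟩ := hreach j
  have hmax : |z g| = |z j| := by
    clear hg
    induction hgj using ReflTransGen.head_induction_on with
    | refl => rfl
    | head hstep _ ih =>
      exact ((grounded_laplacian_max_row hb hr hz fun k => ih ▸ hj k).2 _ hstep).trans ih
  have hzero : |z j| = 0 := by
    have := (grounded_laplacian_max_row hb hr hz fun k => hmax ▸ hj k).1
    rw [hmax] at this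
    exact (mul_eq_zero.1 this).resolve_left hg.ne'
  exact hz0 (funext fun k => abs_nonpos_iff.1 (hzero ▸ hj k))

end GroundedLaplacian

theorem Matrix.inv_mul_submatrix_of_rows_supported {R n m : Type*} [CommRing R] [Fintype n]
    [DecidableEq n] (A : Matrix n n R) (B : Matrix n m R) (p : n → Prop) [DecidablePred p]
    (hA : IsUnit A.det) (hsupp : ∀ j, p j → ∀ k, ¬ p k → A j k = 0) :
    (A⁻¹ * B).submatrix (Subtype.val (p := p)) id =
      (A.submatrix (Subtype.val (p := p)) (Subtype.val (p := p)))⁻¹ *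
        B.submatrix (Subtype.val (p := p)) id := by
  set Ap := A.submatrix (Subtype.val (p := p)) Subtype.val
  set Xp := (A⁻¹ * B).submatrix (Subtype.val (p := p)) id
  have hAp : IsUnit Ap.det := isUnit_of_mul_isUnit_left (A.twoBlockTriangular_det' p hsupp ▸ hA)
  have hrows : Ap * Xp = B.submatrix Subtype.val id := by
    ext j k
    calc (Ap * Xp) j k = ∑ l : Subtype p, A j l * (A⁻¹ * B) l k := mul_apply
      _ = ∑ l, A j l * (A⁻¹ * B) l k :=
        Fintype.sum_subtype_eq_sum_of_eq_zero (f := fun l => A j l * (A⁻¹ * B) l k)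
          fun l hl => by rw [hsupp j j.2 l hl, zero_mul]
      _ = B j k := by rw [← mul_apply, mul_nonsing_inv_cancel_left A B hA]
  rw [← hrows, nonsing_inv_mul_cancel_left _ _ hAp]

theorem eq_zero_of_not_transGen {α : Type*} {a : α → α → ℝ} (hnn : ∀ u v, 0 ≤ a u v)
    {t v x : α} (hv : v = t ∨ TransGen (fun u v => 0 < a v u) v t)
    (hx : ¬ TransGen (fun u v => 0 < a v u) x t) : a v x = 0 :=
  le_antisymm (not_lt.1 fun h => hx (hv.elim (fun e => e ▸ .single h) (.head h))) (hnn v x)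

theorem Fin.castAdd_ne_natAdd {n m : ℕ} (j : Fin n) (k : Fin m) :
    Fin.castAdd m j ≠ Fin.natAdd n k := fun h => by
  have := congrArg Fin.val h
  simp only [Fin.val_castAdd, Fin.val_natAdd] at this
  omega

section LeaderFollower

variable {n m : ℕ} {a : Matrix (Fin (n+m)) (Fin (n+m)) ℝ}

theorem follower_block_eq_grounded_laplacian {L : Matrix (Fin (n+m)) (Fin (n+m)) ℝ}
    {L1 : Matrix (Fin n) (Fin n) ℝ}
    (hL : ∀ i j, L i j = (if i = j then ∑ k, a i k else 0) - a i j)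
    (hL1 : ∀ i j, L1 i j = L (Fin.castAdd m i) (Fin.castAdd m j)) :
    L1 = diagonal (fun j => (∑ k, a (Fin.castAdd m j) (Fin.natAdd n k)) +
        ∑ k, a (Fin.castAdd m j) (Fin.castAdd m k)) -
      of fun j k => a (Fin.castAdd m j) (Fin.castAdd m k) := by
  ext j k
  rw [hL1, hL, Fin.sum_univ_add, Matrix.sub_apply, diagonal_apply, of_apply]
  simp only [(Fin.castAdd_injective n m).eq_iff]
  split_ifs <;> ring

theorem exists_follower_fed_by_leader (hnn : ∀ i j, 0 ≤ a i j) {k : Fin m} {j : Fin n}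
    (h : TransGen (fun u v => 0 < a v u) (Fin.natAdd n k) (Fin.castAdd m j)) :
    ∃ g, 0 < ∑ k, a (Fin.castAdd m g) (Fin.natAdd n k) ∧
      ReflTransGen (fun u v => 0 < a (Fin.castAdd m v) (Fin.castAdd m u)) g j := by
  have hk : Fin.natAdd n k ∉ Set.range (Fin.castAdd m) := by
    rintro ⟨u, hu⟩
    exact Fin.castAdd_ne_natAdd u k hu
  obtain ⟨x, hx, g, hxg, hgj⟩ := h.exists_entry_into_range hk
  obtain ⟨k', rfl⟩ : ∃ k', Fin.natAdd n k' = x := by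
    induction x using Fin.addCases with
    | left u => exact absurd ⟨u, rfl⟩ hx
    | right k' => exact ⟨k', rfl⟩
  exact ⟨g, hxg.trans_le (Finset.single_le_sum (fun k _ => hnn _ _) (Finset.mem_univ k')), hgj⟩

theorem det_follower_block_isUnit (hnn : ∀ i j, 0 ≤ a i j)
    (hreach : ∀ j : Fin n, ∃ k : Fin m,
      TransGen (fun u v => 0 < a v u) (Fin.natAdd n k) (Fin.castAdd m j))
    {L : Matrix (Fin (n+m)) (Fin (n+m)) ℝ} {L1 : Matrix (Fin n) (Fin n) ℝ}
    (hL : ∀ i j, L i j = (if i = j then ∑ k, a i k else 0) - a i j)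
    (hL1 : ∀ i j, L1 i j = L (Fin.castAdd m i) (Fin.castAdd m j)) :
    IsUnit L1.det := by
  rw [follower_block_eq_grounded_laplacian hL hL1, isUnit_iff_ne_zero]
  refine det_grounded_laplacian_ne_zero (fun _ _ => hnn _ _)
    (fun _ => Finset.sum_nonneg fun _ _ => hnn _ _) fun j => ?_
  obtain ⟨k, hk⟩ := hreach j
  exact exists_follower_fed_by_leader hnn hk

end LeaderFollower

theorem stmt4_general (n m : ℕ) (a : Matrix (Fin (n+m)) (Fin (n+m)) ℝ)
    (hnn : ∀ i j, 0 ≤ a i j)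
    (hreach : ∀ i : Fin n, ∃ k : Fin m,
      Relation.TransGen (fun u v : Fin (n+m) => 0 < a v u)
        (Fin.natAdd n k) (Fin.castAdd m i))
    (L : Matrix (Fin (n+m)) (Fin (n+m)) ℝ)
    (hL : ∀ i j, L i j = (if i = j then ∑ k, a i k else 0) - a i j)
    (L1 : Matrix (Fin n) (Fin n) ℝ)
    (hL1 : ∀ i j, L1 i j = L (Fin.castAdd m i) (Fin.castAdd m j))
    (L2 : Matrix (Fin n) (Fin m) ℝ)
    (hL2 : ∀ i k, L2 i k = L (Fin.castAdd m i) (Fin.natAdd n k))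
    (i : Fin n)
    (pF : Fin n → Prop) [DecidablePred pF]
    (hpF : ∀ j, pF j ↔ (j = i ∨ Relation.TransGen (fun u v : Fin (n+m) => 0 < a v u)
      (Fin.castAdd m j) (Fin.castAdd m i)))
    (pL : Fin m → Prop) [DecidablePred pL]
    (hpL : ∀ k, pL k ↔ Relation.TransGen (fun u v : Fin (n+m) => 0 < a v u)
      (Fin.natAdd n k) (Fin.castAdd m i))
    -- local Laplacian block among influential followers (local in-degree minus adjacency)
    (Lb1 : Matrix {j // pF j} {j // pF j} ℝ)
    (hLb1 : ∀ j k, Lb1 j k =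
      (if j = k then
        (∑ k' : {x // pF x}, a (Fin.castAdd m j.1) (Fin.castAdd m k'.1)) +
        (∑ k' : {x // pL x}, a (Fin.castAdd m j.1) (Fin.natAdd n k'.1))
       else 0) - a (Fin.castAdd m j.1) (Fin.castAdd m k.1))
    -- local Laplacian block from influential followers to influential leaders
    (Lb2 : Matrix {j // pF j} {k // pL k} ℝ)
    (hLb2 : ∀ j k, Lb2 j k = - a (Fin.castAdd m j.1) (Fin.natAdd n k.1))
    -- row selector of node i
    (Ups : Matrix Unit {j // pF j} ℝ)
    (hUps : ∀ j, Ups () j = if j.1 = i then 1 else 0) :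
    (∀ k : {k // pL k}, (-(Ups * Lb1⁻¹ * Lb2)) () k = (-(L1⁻¹ * L2)) i k.1) ∧
    (∀ k : Fin m, ¬ pL k → (-(L1⁻¹ * L2)) i k = 0) := by
  have hL1det := det_follower_block_isUnit hnn hreach hL hL1
  have hinG : ∀ j, pF j → Fin.castAdd m j = Fin.castAdd m i ∨
      TransGen (fun u v => 0 < a v u) (Fin.castAdd m j) (Fin.castAdd m i) :=
    fun j hj => ((hpF j).1 hj).imp (congrArg _) id
  have hzeroF : ∀ j, pF j → ∀ u, ¬ pF u → a (Fin.castAdd m j) (Fin.castAdd m u) = 0 :=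
    fun j hj u hu => eq_zero_of_not_transGen hnn (hinG j hj) fun h => hu ((hpF u).2 (.inr h))
  have hzeroL : ∀ j, pF j → ∀ k, ¬ pL k → a (Fin.castAdd m j) (Fin.natAdd n k) = 0 :=
    fun j hj k hk => eq_zero_of_not_transGen hnn (hinG j hj) fun h => hk ((hpL k).2 h)
  have hsupp : ∀ j, pF j → ∀ k, ¬ pF k → L1 j k = 0 := by
    intro j hj k hk
    rw [hL1, hL, if_neg ((Fin.castAdd_injective n m).ne fun h : j = k => hk (h ▸ hj)),
      hzeroF j hj k hk, zero_sub, neg_zero]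
  have hLb1' : Lb1 = L1.submatrix Subtype.val Subtype.val := by
    ext j k
    rw [hLb1, submatrix_apply, follower_block_eq_grounded_laplacian hL hL1, Matrix.sub_apply,
      diagonal_apply, of_apply, Fintype.sum_subtype_eq_sum_of_eq_zero (hzeroF j j.2),
      Fintype.sum_subtype_eq_sum_of_eq_zero (hzeroL j j.2), add_comm]
    simp only [Subtype.ext_iff]
  have hL2' : ∀ j k, L2 j k = -a (Fin.castAdd m j) (Fin.natAdd n k) := by
    intro j k
    rw [hL2, hL, if_neg (Fin.castAdd_ne_natAdd j k), zero_sub]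
  have hX := L1.inv_mul_submatrix_of_rows_supported L2 pF hL1det hsupp
  rw [← hLb1'] at hX
  have hi : pF i := (hpF i).2 (.inl rfl)
  have hUps' : ∀ j, Ups () j = if j = ⟨i, hi⟩ then 1 else 0 := fun j => by
    simp only [hUps, Subtype.ext_iff]
  have hrow : ∀ k, (L1⁻¹ * L2) i k = ∑ j, Lb1⁻¹ ⟨i, hi⟩ j * L2 j k := fun k =>
    (congrFun₂ hX ⟨i, hi⟩ k).trans mul_apply
  refine ⟨fun k => ?_, fun k hk => ?_⟩
  · rw [Matrix.neg_apply, Matrix.neg_apply, Matrix.mul_assoc, mul_apply_of_row_eq_ite hUps',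
      mul_apply, hrow]
    simp only [hLb2, hL2']
  · rw [Matrix.neg_apply, neg_eq_zero, hrow]
    exact Finset.sum_eq_zero fun j _ => by rw [hL2', hzeroL j j.2 k hk, neg_zero, mul_zero]

/-- The locally computed NLI row vector `Φ_{Pℓ}^i = -Υ_i (L̄_{1ℓ}^i)⁻¹ L̄_{2ℓ}^i`,
built from the Laplacian sub-blocks of the local influence subgraph `Ḡ_i`, coincides with
the row of `-L1⁻¹ L2` of the global Laplacian partition corresponding to follower `i`,
restricted to the influential leaders of `i`; the global entries at non-influential
leaders are zero. -/
theorem stmt4 (n m : ℕ) (a : Matrix (Fin (n+m)) (Fin (n+m)) ℝ)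
    (hnn : ∀ i j, 0 ≤ a i j) (hhollow : ∀ i, a i i = 0)
    (hleader : ∀ (k : Fin m) (j : Fin (n+m)), a (Fin.natAdd n k) j = 0)
    (hacyclic : ∀ v, ¬ Relation.TransGen (fun u v : Fin (n+m) => 0 < a v u) v v)
    (hreach : ∀ i : Fin n, ∃ k : Fin m,
      Relation.TransGen (fun u v : Fin (n+m) => 0 < a v u)
        (Fin.natAdd n k) (Fin.castAdd m i))
    (L : Matrix (Fin (n+m)) (Fin (n+m)) ℝ)
    (hL : ∀ i j, L i j = (if i = j then ∑ k, a i k else 0) - a i j)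
    (L1 : Matrix (Fin n) (Fin n) ℝ)
    (hL1 : ∀ i j, L1 i j = L (Fin.castAdd m i) (Fin.castAdd m j))
    (L2 : Matrix (Fin n) (Fin m) ℝ)
    (hL2 : ∀ i k, L2 i k = L (Fin.castAdd m i) (Fin.natAdd n k))
    (i : Fin n)
    (pF : Fin n → Prop) [DecidablePred pF]
    (hpF : ∀ j, pF j ↔ (j = i ∨ Relation.TransGen (fun u v : Fin (n+m) => 0 < a v u)
      (Fin.castAdd m j) (Fin.castAdd m i)))
    (pL : Fin m → Prop) [DecidablePred pL]
    (hpL : ∀ k, pL k ↔ Relation.TransGen (fun u v : Fin (n+m) => 0 < a v u)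
      (Fin.natAdd n k) (Fin.castAdd m i))
    -- local Laplacian block among influential followers (local in-degree minus adjacency)
    (Lb1 : Matrix {j // pF j} {j // pF j} ℝ)
    (hLb1 : ∀ j k, Lb1 j k =
      (if j = k then
        (∑ k' : {x // pF x}, a (Fin.castAdd m j.1) (Fin.castAdd m k'.1)) +
        (∑ k' : {x // pL x}, a (Fin.castAdd m j.1) (Fin.natAdd n k'.1))
       else 0) - a (Fin.castAdd m j.1) (Fin.castAdd m k.1))
    -- local Laplacian block from influential followers to influential leaders
    (Lb2 : Matrix {j // pF j} {k // pL k} ℝ)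
    (hLb2 : ∀ j k, Lb2 j k = - a (Fin.castAdd m j.1) (Fin.natAdd n k.1))
    -- row selector of node i
    (Ups : Matrix Unit {j // pF j} ℝ)
    (hUps : ∀ j, Ups () j = if j.1 = i then 1 else 0) :
    (∀ k : {k // pL k}, (-(Ups * Lb1⁻¹ * Lb2)) () k = (-(L1⁻¹ * L2)) i k.1) ∧
    (∀ k : Fin m, ¬ pL k → (-(L1⁻¹ * L2)) i k = 0) :=
  stmt4_general n m a hnn hreach L hL L1 hL1 L2 hL2 i pF hpF pL hpL Lb1 hLb1 Lb2 hLb2 Ups hUps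
end

section
/- Let G be a directed acyclic graph with followers F and leaders R. Then for every follower i, the local NLI row vector Φ_{Pℓ}^i = -Υ_i (L̄_{1ℓ}^i)^{-1} L̄_{2ℓ}^i satisfies Φ_{Pℓ}^i · 1 = 1 (its entries sum to one) for all i ∈ F if and only if every follower has at least one leader with a directed path to it. Moreover, when this holds, all entries of Φ_{Pℓ}^i are nonnegative, so the reference output y_i^* lies in the convex hull of the influential leaders' outputs. -/
/-!
Suppose every follower is reached from a leader, and fix a follower `i`. On its influence
subgraph `L̄₁ = D - A`, where `A` holds the follower–follower weights and the diagonal `D` collects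
all incoming weights, from followers and leaders alike. Acyclicity makes `D⁻¹A` nilpotent (entries
of its powers are supported on paths, along which a height function strictly increases), so the
Neumann series gives `L̄₁⁻¹ = (∑ₜ (D⁻¹A)ᵗ) D⁻¹ ≥ 0`. Here `D` is invertible because each follower
of the subgraph has an in-neighbour in it: the last vertex of a path from a leader. Since
`L̄₁ 𝟙 = -L̄₂ 𝟙`, the matrix `-L̄₁⁻¹ L̄₂` is nonnegative with unit row sums, and `Φ_{Pℓ}^i` is one
of its rows. Conversely, a follower reached by no leader has no leader columns, so its row sum is
the empty sum `0`.
-/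

open Matrix Finset Relation

namespace Matrix

variable {α κ R : Type*} [Fintype α] [DecidableEq α]

section Semiring

variable [Semiring R]

theorem add_le_of_pow_apply_ne_zero {M : Matrix α α R} {h : α → ℕ}
    (hM : ∀ j k, M j k ≠ 0 → h k < h j) (p : ℕ) {j k : α} (hjk : (M ^ p) j k ≠ 0) :
    h k + p ≤ h j := by
  induction p generalizing k with
  | zero =>
    obtain rfl : j = k := by
      by_contra hne
      exact hjk (by simp [one_apply_ne hne])
    simp
  | succ p ih =>
    rw [pow_succ, mul_apply] at hjk
    obtain ⟨x, -, hx⟩ := exists_ne_zero_of_sum_ne_zero hjk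
    have hjx := ih (ne_zero_and_ne_zero_of_mul hx).1
    have hxk := hM x k (ne_zero_and_ne_zero_of_mul hx).2
    omega

theorem pow_eq_zero_of_height_lt {M : Matrix α α R} (h : α → ℕ)
    (hM : ∀ j k, M j k ≠ 0 → h k < h j) {p : ℕ} (hp : ∀ j, h j < p) : M ^ p = 0 := by
  ext j k
  by_contra hjk
  have := add_le_of_pow_apply_ne_zero hM p hjk
  have := hp j
  omega

theorem pow_card_eq_zero_of_acyclic {M : Matrix α α R}
    (hM : ∀ x, ¬ TransGen (fun k j => M j k ≠ 0) x x) : M ^ Fintype.card α = 0 := by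
  classical
  -- height of a vertex: the number of its strict ancestors
  refine pow_eq_zero_of_height_lt (fun x => #{z | TransGen (fun k j => M j k ≠ 0) z x}) ?_ ?_
  · intro j k hjk
    refine card_lt_card ((ssubset_iff_of_subset fun z hz => ?_).2 ⟨k, ?_, ?_⟩)
    · exact mem_filter.2 ⟨mem_univ _, (mem_filter.1 hz).2.tail hjk⟩
    · exact mem_filter.2 ⟨mem_univ _, TransGen.single hjk⟩
    · exact fun hk => hM k (mem_filter.1 hk).2
  · intro j
    rw [← card_univ]
    refine card_lt_card ((ssubset_iff_of_subset (filter_subset _ _)).2 ⟨j, mem_univ _, ?_⟩)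
    exact fun hj => hM j (mem_filter.1 hj).2

theorem mul_apply_of_row_eq_indicator {u : Matrix Unit α R} {i : α}
    (hu : ∀ j, u () j = if j = i then 1 else 0) (X : Matrix α κ R) (k : κ) :
    (u * X) () k = X i k := by
  simp [mul_apply, hu, one_mul]

end Semiring

variable [Fintype κ]

-- `L̄₁` of a follower set with follower weights `A` and leader weights `B`; then `L̄₂ = -B`.
def groundedLaplacian [Ring R] (A : Matrix α α R) (B : Matrix α κ R) : Matrix α α R :=
  diagonal (fun j => ∑ k, A j k + ∑ k, B j k) - A

theorem groundedLaplacian_mulVec_one [Ring R] (A : Matrix α α R) (B : Matrix α κ R) :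
    groundedLaplacian A B *ᵥ 1 = B *ᵥ 1 := by
  ext j
  rw [groundedLaplacian, sub_mulVec, Pi.sub_apply, mulVec_diagonal]
  simp [mulVec, dotProduct]

section LinearOrderedField

variable [Field R] [LinearOrder R] [IsStrictOrderedRing R]

theorem exists_nonneg_right_inv_diagonal_sub {d : α → R} (hd : ∀ j, 0 < d j)
    {A : Matrix α α R} (hA : ∀ j k, 0 ≤ A j k)
    (hacyc : ∀ x, ¬ TransGen (fun k j => 0 < A j k) x x) :
    ∃ B, (diagonal d - A) * B = 1 ∧ ∀ j k, 0 ≤ B j k := by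
  set N := diagonal d⁻¹ * A
  have hN : ∀ j k, N j k = (d j)⁻¹ * A j k := fun j k => diagonal_mul _ _ _ _
  have hNnil : N ^ Fintype.card α = 0 := by
    refine pow_card_eq_zero_of_acyclic fun x hx => hacyc x ?_
    refine TransGen.mono (fun k j hkj => ?_) x x hx
    rw [hN] at hkj
    exact (hA j k).lt_of_ne' (right_ne_zero_of_mul hkj)
  have hdd : diagonal d * diagonal d⁻¹ = 1 := by
    rw [diagonal_mul_diagonal, ← diagonal_one]
    exact congrArg diagonal (funext fun j => mul_inv_cancel₀ (hd j).ne')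
  have hfact : diagonal d - A = diagonal d * (1 - N) := by
    rw [Matrix.mul_sub, mul_one, ← Matrix.mul_assoc, hdd, Matrix.one_mul]
  refine ⟨(∑ t ∈ range (Fintype.card α), N ^ t) * diagonal d⁻¹, ?_, fun j k => ?_⟩
  · calc (diagonal d - A) * ((∑ t ∈ range (Fintype.card α), N ^ t) * diagonal d⁻¹)
        = diagonal d * ((1 - N) * ∑ t ∈ range (Fintype.card α), N ^ t) * diagonal d⁻¹ := by
          simp only [hfact, Matrix.mul_assoc]
      _ = 1 := by rw [mul_neg_geom_sum, hNnil, sub_zero, mul_one, hdd]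
  · rw [mul_diagonal, sum_apply]
    exact mul_nonneg (sum_nonneg fun t _ => pow_apply_nonneg (fun j k => by
      rw [hN]; exact mul_nonneg (inv_nonneg.2 (hd j).le) (hA j k)) t j k)
      (inv_nonneg.2 (hd k).le)

theorem inv_groundedLaplacian_mul_stochastic {A : Matrix α α R} {B : Matrix α κ R}
    (hA : ∀ j k, 0 ≤ A j k) (hB : ∀ j k, 0 ≤ B j k)
    (hacyc : ∀ x, ¬ TransGen (fun k j => 0 < A j k) x x)
    (hpos : ∀ j, 0 < ∑ k, A j k + ∑ k, B j k) :
    (∀ j, ∑ k, ((groundedLaplacian A B)⁻¹ * B) j k = 1) ∧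
      ∀ j k, 0 ≤ ((groundedLaplacian A B)⁻¹ * B) j k := by
  obtain ⟨C, hC, hCnn⟩ : ∃ C, groundedLaplacian A B * C = 1 ∧ ∀ j k, 0 ≤ C j k :=
    exists_nonneg_right_inv_diagonal_sub hpos hA hacyc
  have hL : (groundedLaplacian A B)⁻¹ * groundedLaplacian A B = 1 :=
    nonsing_inv_mul _ (isUnit_det_of_right_inverse hC)
  refine ⟨fun j => ?_, fun j k => ?_⟩
  · have hrow : ((groundedLaplacian A B)⁻¹ * B) *ᵥ 1 = 1 := by
      rw [← mulVec_mulVec, ← groundedLaplacian_mulVec_one, mulVec_mulVec, hL, one_mulVec]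
    simpa [mulVec, dotProduct] using congrFun hrow j
  · rw [inv_eq_right_inv hC, mul_apply]
    exact sum_nonneg fun l _ => mul_nonneg (hCnn j l) (hB l k)

end LinearOrderedField

end Matrix

theorem sum_castAdd_add_sum_natAdd_pos {R : Type*} [AddCommMonoid R] [PartialOrder R]
    [IsOrderedCancelAddMonoid R] {n m : ℕ} {f : Fin (n + m) → R} (hf : ∀ u, 0 ≤ f u)
    {pF : Fin n → Prop} {pL : Fin m → Prop} [DecidablePred pF] [DecidablePred pL]
    {u : Fin (n + m)} (hu : 0 < f u) (hF : ∀ j, Fin.castAdd m j = u → pF j)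
    (hL : ∀ k, Fin.natAdd n k = u → pL k) :
    0 < ∑ j : {j // pF j}, f (Fin.castAdd m j) + ∑ k : {k // pL k}, f (Fin.natAdd n k) := by
  induction u using Fin.addCases with
  | left j =>
    refine add_pos_of_pos_of_nonneg ?_ (sum_nonneg fun _ _ => hf _)
    exact hu.trans_le (single_le_sum (f := fun j : {j // pF j} => f (Fin.castAdd m j))
      (fun _ _ => hf _) (mem_univ ⟨j, hF j rfl⟩))
  | right k =>
    refine add_pos_of_nonneg_of_pos (sum_nonneg fun _ _ => hf _) ?_
    exact hu.trans_le (single_le_sum (f := fun k : {k // pL k} => f (Fin.natAdd n k))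
      (fun _ _ => hf _) (mem_univ ⟨k, hL k rfl⟩))

theorem sum_influence_weights_pos {n m : ℕ} {a : Matrix (Fin (n + m)) (Fin (n + m)) ℝ}
    (hnn : ∀ i j, 0 ≤ a i j) {pF : Fin n → Prop} {pL : Fin m → Prop}
    [DecidablePred pF] [DecidablePred pL] {i j : Fin n}
    (hpF : ∀ j, pF j ↔
      (j = i ∨ TransGen (fun u v => 0 < a v u) (Fin.castAdd m j) (Fin.castAdd m i)))
    (hpL : ∀ k, pL k ↔ TransGen (fun u v => 0 < a v u) (Fin.natAdd n k) (Fin.castAdd m i))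
    (hj : pF j)
    (hreach : ∃ k, TransGen (fun u v => 0 < a v u) (Fin.natAdd n k) (Fin.castAdd m j)) :
    0 < ∑ j' : {j' // pF j'}, a (Fin.castAdd m j) (Fin.castAdd m j') +
      ∑ k : {k // pL k}, a (Fin.castAdd m j) (Fin.natAdd n k) := by
  obtain ⟨k, hk⟩ := hreach
  obtain ⟨u, -, hu⟩ := TransGen.tail'_iff.1 hk
  have hui : TransGen (fun u v => 0 < a v u) u (Fin.castAdd m i) := by
    rcases (hpF j).1 hj with rfl | hji
    · exact TransGen.single hu
    · exact TransGen.head hu hji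
  exact sum_castAdd_add_sum_natAdd_pos (hnn _) hu
    (fun j' hj' => (hpF j').2 (Or.inr (hj' ▸ hui))) (fun k hk => (hpL k).2 (hk ▸ hui))

theorem stmt5_general (n m : ℕ) (a : Matrix (Fin (n+m)) (Fin (n+m)) ℝ)
    (hnn : ∀ i j, 0 ≤ a i j)
    (hacyclic : ∀ v, ¬ Relation.TransGen (fun u v : Fin (n+m) => 0 < a v u) v v)
    (pF : Fin n → Fin n → Prop) [∀ i, DecidablePred (pF i)]
    (hpF : ∀ i j, pF i j ↔ (j = i ∨ Relation.TransGen (fun u v : Fin (n+m) => 0 < a v u)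
      (Fin.castAdd m j) (Fin.castAdd m i)))
    (pL : Fin n → Fin m → Prop) [∀ i, DecidablePred (pL i)]
    (hpL : ∀ i k, pL i k ↔ Relation.TransGen (fun u v : Fin (n+m) => 0 < a v u)
      (Fin.natAdd n k) (Fin.castAdd m i))
    (Lb1 : (i : Fin n) → Matrix {j // pF i j} {j // pF i j} ℝ)
    (hLb1 : ∀ i j k, Lb1 i j k =
      (if j = k then
        (∑ k' : {x // pF i x}, a (Fin.castAdd m j.1) (Fin.castAdd m k'.1)) +
        (∑ k' : {x // pL i x}, a (Fin.castAdd m j.1) (Fin.natAdd n k'.1))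
       else 0) - a (Fin.castAdd m j.1) (Fin.castAdd m k.1))
    (Lb2 : (i : Fin n) → Matrix {j // pF i j} {k // pL i k} ℝ)
    (hLb2 : ∀ i j k, Lb2 i j k = - a (Fin.castAdd m j.1) (Fin.natAdd n k.1))
    (Ups : (i : Fin n) → Matrix Unit {j // pF i j} ℝ)
    (hUps : ∀ i j, Ups i () j = if j.1 = i then 1 else 0) :
    ((∀ i : Fin n, ∑ k : {k // pL i k}, (-(Ups i * (Lb1 i)⁻¹ * Lb2 i)) () k = 1) ↔
      (∀ i : Fin n, ∃ k : Fin m,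
        Relation.TransGen (fun u v : Fin (n+m) => 0 < a v u)
          (Fin.natAdd n k) (Fin.castAdd m i))) ∧
    ((∀ i : Fin n, ∃ k : Fin m,
        Relation.TransGen (fun u v : Fin (n+m) => 0 < a v u)
          (Fin.natAdd n k) (Fin.castAdd m i)) →
      ∀ (i : Fin n) (k : {k // pL i k}), 0 ≤ (-(Ups i * (Lb1 i)⁻¹ * Lb2 i)) () k) := by
  have hrow : (∀ i : Fin n, ∃ k : Fin m, TransGen (fun u v : Fin (n+m) => 0 < a v u)
      (Fin.natAdd n k) (Fin.castAdd m i)) → ∀ i : Fin n,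
      (∑ k, (-(Ups i * (Lb1 i)⁻¹ * Lb2 i)) () k = 1) ∧
        ∀ k, 0 ≤ (-(Ups i * (Lb1 i)⁻¹ * Lb2 i)) () k := by
    intro hreach i
    set A : Matrix {j // pF i j} {j // pF i j} ℝ :=
      of fun j k => a (Fin.castAdd m j) (Fin.castAdd m k)
    set B : Matrix {j // pF i j} {k // pL i k} ℝ :=
      of fun j k => a (Fin.castAdd m j) (Fin.natAdd n k)
    have hΦ : -(Ups i * (Lb1 i)⁻¹ * Lb2 i) = Ups i * ((groundedLaplacian A B)⁻¹ * B) := by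
      have hL1 : Lb1 i = groundedLaplacian A B := by
        ext j k
        simp [hLb1, groundedLaplacian, A, B, diagonal_apply]
      have hL2 : Lb2 i = -B := by
        ext j k
        simp [hLb2, B]
      rw [hL1, hL2, Matrix.mul_neg, neg_neg, Matrix.mul_assoc]
    have hii : pF i i := (hpF i i).2 (Or.inl rfl)
    have hUps' : ∀ j, Ups i () j = if j = ⟨i, hii⟩ then 1 else 0 := fun j => by
      simp [hUps, Subtype.ext_iff]
    obtain ⟨hsum, hnonneg⟩ := inv_groundedLaplacian_mul_stochastic (fun _ _ => hnn _ _)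
      (fun _ _ => hnn _ _) (fun x hx => hacyclic _ (TransGen.lift _ (fun _ _ h => h) x x hx))
      (fun j => sum_influence_weights_pos hnn (hpF i) (hpL i) j.2 (hreach j))
    simp only [hΦ, mul_apply_of_row_eq_indicator hUps']
    exact ⟨hsum _, hnonneg _⟩
  refine ⟨⟨fun hsum i => ?_, fun h i => (hrow h i).1⟩, fun h i => (hrow h i).2⟩
  by_contra hi
  have : IsEmpty {k // pL i k} := ⟨fun k => hi ⟨k, (hpL i k).1 k.2⟩⟩
  simpa using hsum i

/-- In a DAG, the local NLI row vectors `Φ_{Pℓ}^i = -Υ_i (L̄_{1ℓ}^i)⁻¹ L̄_{2ℓ}^i`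
have entries summing to one for every follower `i` if and only if every follower is
reachable from at least one leader; and when this holds, all entries are nonnegative. -/
theorem stmt5 (n m : ℕ) (a : Matrix (Fin (n+m)) (Fin (n+m)) ℝ)
    (hnn : ∀ i j, 0 ≤ a i j) (hhollow : ∀ i, a i i = 0)
    (hleader : ∀ (k : Fin m) (j : Fin (n+m)), a (Fin.natAdd n k) j = 0)
    (hacyclic : ∀ v, ¬ Relation.TransGen (fun u v : Fin (n+m) => 0 < a v u) v v)
    (pF : Fin n → Fin n → Prop) [∀ i, DecidablePred (pF i)]
    (hpF : ∀ i j, pF i j ↔ (j = i ∨ Relation.TransGen (fun u v : Fin (n+m) => 0 < a v u)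
      (Fin.castAdd m j) (Fin.castAdd m i)))
    (pL : Fin n → Fin m → Prop) [∀ i, DecidablePred (pL i)]
    (hpL : ∀ i k, pL i k ↔ Relation.TransGen (fun u v : Fin (n+m) => 0 < a v u)
      (Fin.natAdd n k) (Fin.castAdd m i))
    (Lb1 : (i : Fin n) → Matrix {j // pF i j} {j // pF i j} ℝ)
    (hLb1 : ∀ i j k, Lb1 i j k =
      (if j = k then
        (∑ k' : {x // pF i x}, a (Fin.castAdd m j.1) (Fin.castAdd m k'.1)) +
        (∑ k' : {x // pL i x}, a (Fin.castAdd m j.1) (Fin.natAdd n k'.1))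
       else 0) - a (Fin.castAdd m j.1) (Fin.castAdd m k.1))
    (Lb2 : (i : Fin n) → Matrix {j // pF i j} {k // pL i k} ℝ)
    (hLb2 : ∀ i j k, Lb2 i j k = - a (Fin.castAdd m j.1) (Fin.natAdd n k.1))
    (Ups : (i : Fin n) → Matrix Unit {j // pF i j} ℝ)
    (hUps : ∀ i j, Ups i () j = if j.1 = i then 1 else 0) :
    ((∀ i : Fin n, ∑ k : {k // pL i k}, (-(Ups i * (Lb1 i)⁻¹ * Lb2 i)) () k = 1) ↔
      (∀ i : Fin n, ∃ k : Fin m,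
        Relation.TransGen (fun u v : Fin (n+m) => 0 < a v u)
          (Fin.natAdd n k) (Fin.castAdd m i))) ∧
    ((∀ i : Fin n, ∃ k : Fin m,
        Relation.TransGen (fun u v : Fin (n+m) => 0 < a v u)
          (Fin.natAdd n k) (Fin.castAdd m i)) →
      ∀ (i : Fin n) (k : {k // pL i k}), 0 ≤ (-(Ups i * (Lb1 i)⁻¹ * Lb2 i)) () k) :=
  stmt5_general n m a hnn hacyclic pF hpF pL hpL Lb1 hLb1 Lb2 hLb2 Ups hUps
end
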